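/- For unit vectors A, B, C in a real inner product space, the cosine similarity obeys the Cauchy–Schwarz-type bound: ⟨A, C⟩ · ⟨C, B⟩ − √((1 − ⟨A, C⟩²)(1 − ⟨C, B⟩²)) ≤ ⟨A, B⟩ ≤ ⟨A, C⟩ · ⟨C, B⟩ + √((1 − ⟨A, C⟩²)(1 − ⟨C, B⟩²)). -/

import Mathlib

open scoped RealInnerProductSpace

/- Removing from A and B their components along C leaves vectors of squared lengths
1 - ⟪A, C⟫² and 1 - ⟪C, B⟫² whose inner product is ⟪A, B⟫ - ⟪A, C⟫⟪C, B⟫; Cauchy–Schwarz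
for these two vectors is the claimed two-sided bound. -/

section UnitVector

variable {V : Type*} [NormedAddCommGroup V] [InnerProductSpace ℝ V] {c : V}

theorem inner_sub_inner_smul_of_norm_eq_one (hc : ‖c‖ = 1) (x y : V) :
    ⟪x - ⟪x, c⟫ • c, y - ⟪y, c⟫ • c⟫ = ⟪x, y⟫ - ⟪x, c⟫ * ⟪y, c⟫ := by
  have hcc : ⟪c, c⟫ = 1 := by rw [real_inner_self_eq_norm_sq, hc, one_pow]
  simp only [inner_sub_left, inner_sub_right, real_inner_smul_left, real_inner_smul_right,
    real_inner_comm y c, hcc]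
  ring

theorem norm_sub_inner_smul_sq_of_norm_eq_one (hc : ‖c‖ = 1) (x : V) :
    ‖x - ⟪x, c⟫ • c‖ ^ 2 = ‖x‖ ^ 2 - ⟪x, c⟫ ^ 2 := by
  rw [← real_inner_self_eq_norm_sq, ← real_inner_self_eq_norm_sq,
    inner_sub_inner_smul_of_norm_eq_one hc, sq]

theorem abs_inner_sub_inner_mul_inner_le_of_norm_eq_one (hc : ‖c‖ = 1) (x y : V) :
    |⟪x, y⟫ - ⟪x, c⟫ * ⟪c, y⟫| ≤
      Real.sqrt ((‖x‖ ^ 2 - ⟪x, c⟫ ^ 2) * (‖y‖ ^ 2 - ⟪c, y⟫ ^ 2)) := by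
  rw [real_inner_comm y c, ← inner_sub_inner_smul_of_norm_eq_one hc,
    ← norm_sub_inner_smul_sq_of_norm_eq_one hc, ← norm_sub_inner_smul_sq_of_norm_eq_one hc,
    ← mul_pow, Real.sqrt_sq (by positivity)]
  exact abs_real_inner_le_norm _ _

end UnitVector

/-- Cauchy–Schwarz-type bound for the cosine similarity of unit vectors. -/
theorem inner_bounds_of_unit_vectors {V : Type*} [NormedAddCommGroup V]
    [InnerProductSpace ℝ V] (A B C : V)
    (hA : ‖A‖ = 1) (hB : ‖B‖ = 1) (hC : ‖C‖ = 1) :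
    ⟪A, C⟫ * ⟪C, B⟫ - Real.sqrt ((1 - ⟪A, C⟫ ^ 2) * (1 - ⟪C, B⟫ ^ 2)) ≤ ⟪A, B⟫ ∧
    ⟪A, B⟫ ≤ ⟪A, C⟫ * ⟪C, B⟫ + Real.sqrt ((1 - ⟪A, C⟫ ^ 2) * (1 - ⟪C, B⟫ ^ 2)) := by
  have h := abs_inner_sub_inner_mul_inner_le_of_norm_eq_one hC A B
  rw [hA, hB, one_pow, abs_le] at h
  constructor <;> linarith [h.1, h.2]
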